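/- arXiv:2205.08992 — 6 statements merged into one kernel-verified Lean document; each statement's English description precedes it below -/
import Mathlib

section
/- Let P be an infinite poset with no infinite antichain such that every ideal of P distinct from P is finite. Then every proper initial segment of P is finite. -/
/-- An infinite poset with no infinite antichain in which every ideal distinct
from the whole poset is finite has all proper initial segments finite. -/
theorem stmt2 (P : Type*) [PartialOrder P] [Infinite P]
    (hac : ∀ A : Set P, (∀ x ∈ A, ∀ y ∈ A, x ≠ y → ¬ x ≤ y ∧ ¬ y ≤ x) → A.Finite)
    (hid : ∀ I : Set P, I.Nonempty → (∀ x ∈ I, ∀ y, y ≤ x → y ∈ I) →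
      (∀ x ∈ I, ∀ y ∈ I, ∃ z ∈ I, x ≤ z ∧ y ≤ z) → I ≠ Set.univ → I.Finite) :
    ∀ S : Set P, (∀ x ∈ S, ∀ y, y ≤ x → y ∈ S) → S ≠ Set.univ → S.Finite := by
  intro S hS hSuniv
  by_contra hfin
  have hSinf : S.Infinite := hfin
  obtain ⟨w, hw⟩ : ∃ w, w ∉ S := by
    by_contra h
    push_neg at h
    exact hSuniv (Set.eq_univ_iff_forall.mpr h)
  -- principal downsets of elements of S are finite
  have hprin : ∀ x ∈ S, {y | y ≤ x}.Finite := by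
    intro x hx
    refine hid {y | y ≤ x} ⟨x, le_refl x⟩ ?_ ?_ ?_
    · intro a ha b hb; exact hb.trans ha
    · intro a ha b hb; exact ⟨x, le_refl x, ha, hb⟩
    · intro h
      have hwx : w ≤ x := show w ∈ {y | y ≤ x} from h.symm ▸ Set.mem_univ w
      exact hw (hS x hx w hwx)
  -- key: every infinite subset of S has an element with infinitely many strict
  -- upper bounds inside it
  have key : ∀ T : Set P, T ⊆ S → T.Infinite → ∃ x ∈ T, {y ∈ T | x < y}.Infinite := by
    intro T hTS hTinf
    by_contra h
    push_neg at h
    have hfins : ∀ x ∈ T, {y ∈ T | x < y}.Finite := by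
      intro x hx
      have := h x hx
      exact this
    set A := {a ∈ T | ∀ b ∈ T, b ≤ a → b = a} with hA_def
    have hAfin : A.Finite := by
      apply hac
      intro a ha b hb hab
      constructor
      · intro hle; exact hab (hb.2 a ha.1 hle)
      · intro hle; exact hab.symm (ha.2 b hb.1 hle)
    have hcover : T ⊆ ⋃ a ∈ A, {y ∈ T | a ≤ y} := by
      intro y hy
      have hfin' : {z ∈ T | z ≤ y}.Finite :=
        (hprin y (hTS hy)).subset (fun z hz => hz.2)
      obtain ⟨z, hz, hzmin⟩ := Set.Finite.exists_minimalFor id _ hfin' ⟨y, hy, le_refl y⟩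
      have hzA : z ∈ A := by
        refine ⟨hz.1, fun b hb hble => ?_⟩
        have hb' : b ∈ {z ∈ T | z ≤ y} := ⟨hb, hble.trans hz.2⟩
        exact le_antisymm hble (hzmin hb' hble)
      exact Set.mem_biUnion hzA ⟨hy, hz.2⟩
    have hTfin : T.Finite := by
      refine (Set.Finite.biUnion hAfin fun a ha => ?_).subset hcover
      have : {y ∈ T | a ≤ y} ⊆ {a} ∪ {y ∈ T | a < y} := by
        intro y hy
        rcases eq_or_lt_of_le hy.2 with h' | h'
        · exact Or.inl h'.symm
        · exact Or.inr ⟨hy.1, h'⟩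
      exact ((Set.finite_singleton a).union (hfins a ha.1)).subset this
    exact hTinf hTfin
  -- build an infinite strictly increasing sequence in S
  classical
  let Q := {T : Set P // T ⊆ S ∧ T.Infinite}
  have step : ∀ q : Q, ∃ x ∈ q.1, {y ∈ q.1 | x < y}.Infinite :=
    fun q => key q.1 q.2.1 q.2.2
  let f : Q → P × Q := fun q =>
    ⟨(step q).choose,
     ⟨{y ∈ q.1 | (step q).choose < y},
      fun y hy => q.2.1 hy.1, (step q).choose_spec.2⟩⟩
  let seq : ℕ → Q := fun n => Nat.rec ⟨S, subset_rfl, hSinf⟩ (fun _ q => (f q).2) n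
  let x : ℕ → P := fun n => (f (seq n)).1
  have hxmem : ∀ n, x n ∈ (seq n).1 := fun n => (step (seq n)).choose_spec.1
  have hsucc : ∀ n, (seq (n + 1)).1 = {y ∈ (seq n).1 | x n < y} := fun n => rfl
  have hmono : ∀ m n, n ≤ m → (seq m).1 ⊆ (seq n).1 := by
    intro m
    induction m with
    | zero => intro n hn; rw [Nat.le_zero.mp hn]
    | succ k ih =>
      intro n hn
      rcases Nat.lt_or_ge n (k + 1) with h' | h'
      · exact fun y hy => ih n (Nat.lt_succ_iff.mp h') (by rw [hsucc k] at hy; exact hy.1)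
      · rw [le_antisymm hn h']
  have hlt : ∀ n m, n < m → x n < x m := by
    intro n m hnm
    have : x m ∈ (seq (n + 1)).1 := hmono m (n + 1) hnm (hxmem m)
    rw [hsucc n] at this
    exact this.2
  have hxinj : Function.Injective x := by
    intro a b hab
    by_contra hne
    rcases Nat.lt_or_ge a b with h' | h'
    · exact absurd hab (ne_of_lt (hlt a b h'))
    · exact absurd hab.symm (ne_of_lt (hlt b a (lt_of_le_of_ne h' (Ne.symm hne))))
  have hxS : ∀ n, x n ∈ S := fun n => (seq n).2.1 (hxmem n)
  -- the downward closure of the chain is an infinite proper ideal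
  set I := {y | ∃ n, y ≤ x n} with hI_def
  have hII : I.Finite := by
    apply hid
    · exact ⟨x 0, 0, le_refl _⟩
    · rintro a ⟨n, hn⟩ b hb; exact ⟨n, hb.trans hn⟩
    · rintro a ⟨n, hn⟩ b ⟨m, hm⟩
      rcases Nat.lt_or_ge n m with h' | h'
      · exact ⟨x m, ⟨m, le_refl _⟩, hn.trans (le_of_lt (hlt n m h')), hm⟩
      · rcases Nat.lt_or_ge m n with h'' | h''
        · exact ⟨x n, ⟨n, le_refl _⟩, hn, hm.trans (le_of_lt (hlt m n h''))⟩
        · have : n = m := le_antisymm h'' h'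
          exact ⟨x n, ⟨n, le_refl _⟩, hn, this ▸ hm⟩
    · intro h
      have hwI : w ∈ I := h.symm ▸ Set.mem_univ w
      obtain ⟨n, hn⟩ := hwI
      exact hw (hS (x n) (hxS n) w hn)
  have hrange : Set.range x ⊆ I := by rintro _ ⟨n, rfl⟩; exact ⟨n, le_refl _⟩
  exact Set.infinite_range_of_injective hxinj (hII.subset hrange)
end

section
/- Let P be an infinite well-founded poset that is level-finite (each level P_n, the set of elements of height n, is finite). Then P contains an infinite initial segment J such that every proper initial segment of J is finite. -/
section aux

variable {P : Type*} [PartialOrder P]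

/-- Below an element of height ≥ n there is an element of height exactly n. -/
lemma aux_exists_le_height_eq (hwf : WellFoundedLT P) (n : ℕ) :
    ∀ x : P, (n : ℕ∞) ≤ Order.height x → ∃ y, y ≤ x ∧ Order.height y = (n : ℕ∞) := by
  intro x
  induction x using hwf.induction with
  | _ x IH =>
    intro hn
    rcases eq_or_lt_of_le hn with h | h
    · exact ⟨x, le_refl x, h.symm⟩
    · rcases lt_or_eq_of_le (le_top : Order.height x ≤ ⊤) with hfin | htop
      · obtain ⟨y, hyx, hy⟩ := (Order.coe_lt_height_iff hfin).mp h
        exact ⟨y, hyx.le, hy⟩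
      · -- height x = ⊤ : find z < x with n ≤ height z
        by_contra hcon
        push_neg at hcon
        have hlt : ∀ z, z < x → Order.height z + 1 ≤ (n : ℕ∞) := by
          intro z hz
          by_contra hzc
          push_neg at hzc
          have hnz : (n : ℕ∞) ≤ Order.height z := by
            cases hh : Order.height z with
            | top => exact le_top
            | coe m =>
              rw [hh] at hzc
              norm_cast at hzc ⊢
              omega
          obtain ⟨y, hy1, hy2⟩ := IH z hz hnz
          exact hcon y (hy1.trans hz.le) hy2
        have : Order.height x ≤ (n : ℕ∞) := by
          rw [Order.height_eq_iSup_lt_height]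
          exact iSup₂_le hlt
        rw [htop] at this
        exact (lt_irrefl _ (lt_of_le_of_lt (le_top.trans this) (by
          exact_mod_cast ENat.coe_lt_top n))).elim

/-- Elements of height < n form a finite set. -/
lemma aux_finite_lt (hlf : ∀ n : ℕ, {x : P | Order.height x = (n : ℕ∞)}.Finite) (n : ℕ) :
    {x : P | Order.height x < (n : ℕ∞)}.Finite := by
  have : {x : P | Order.height x < (n : ℕ∞)} ⊆
      ⋃ k ∈ Finset.range n, {x : P | Order.height x = (k : ℕ∞)} := by
    intro x hx
    simp only [Set.mem_setOf_eq] at hx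
    cases hh : Order.height x with
    | top => rw [hh] at hx; exact absurd hx (by simp)
    | coe m =>
      rw [hh] at hx
      have hm : m < n := by exact_mod_cast hx
      simp only [Set.mem_iUnion]
      exact ⟨m, Finset.mem_range.mpr hm, hh⟩
  exact Set.Finite.subset (Set.Finite.biUnion (Finset.range n).finite_toSet
    (fun k _ => hlf k)) this

/-- Every infinite downward-closed set meets every level. -/
lemma aux_meets (hwf : WellFoundedLT P)
    (hlf : ∀ n : ℕ, {x : P | Order.height x = (n : ℕ∞)}.Finite)
    {I : Set P} (hdc : ∀ x ∈ I, ∀ y, y ≤ x → y ∈ I) (hinf : I.Infinite) (n : ℕ) :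
    ∃ y ∈ I, Order.height y = (n : ℕ∞) := by
  obtain ⟨x, hxI, hxh⟩ := (hinf.diff (aux_finite_lt hlf n)).nonempty
  simp only [Set.mem_setOf_eq, not_lt] at hxh
  obtain ⟨y, hyx, hy⟩ := aux_exists_le_height_eq hwf n x hxh
  exact ⟨y, hdc x hxI y hyx, hy⟩

end aux

/-- Every infinite well-founded level-finite poset contains an infinite initial
segment all of whose proper initial segments are finite (a countable Jónsson poset). -/
theorem stmt3 (P : Type*) [PartialOrder P] [Infinite P]
    (hwf : WellFoundedLT P)
    (hlf : ∀ n : ℕ, {x : P | Order.height x = (n : ℕ∞)}.Finite) :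
    ∃ J : Set P, J.Infinite ∧ (∀ x ∈ J, ∀ y, y ≤ x → y ∈ J) ∧
      ∀ S : Set P, S ⊆ J → (∀ x ∈ S, ∀ y, y ≤ x → y ∈ S) → S ≠ J → S.Finite := by
  set 𝒮 : Set (Set P) := {I | I.Infinite ∧ ∀ x ∈ I, ∀ y, y ≤ x → y ∈ I} with h𝒮
  have huniv : (Set.univ : Set P) ∈ 𝒮 :=
    ⟨Set.infinite_univ, fun _ _ y _ => Set.mem_univ y⟩
  have hchain : ∀ c ⊆ 𝒮, IsChain (· ⊆ ·) c → c.Nonempty →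
      ∃ lb ∈ 𝒮, ∀ s ∈ c, lb ⊆ s := by
    intro c hc𝒮 hchain hcne
    refine ⟨⋂₀ c, ⟨?_, ?_⟩, fun s hs => Set.sInter_subset_of_mem hs⟩
    · -- infinite: meets every level
      have key : ∀ n : ℕ, ∃ x ∈ ⋂₀ c, Order.height x = (n : ℕ∞) := by
        intro n
        set T : Set (Set P) := (fun I => I ∩ {x : P | Order.height x = (n : ℕ∞)}) '' c with hT
        have hTfin : T.Finite := by
          apply Set.Finite.subset (hlf n).finite_subsets
          rintro _ ⟨I, _, rfl⟩
          exact Set.inter_subset_right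
        have hTne : T.Nonempty := hcne.image _
        obtain ⟨A, hAT, hAmin⟩ : ∃ A ∈ T, ∀ A' ∈ T, id A' ≤ id A → id A = id A' := by
          obtain ⟨A, hA⟩ := hTfin.exists_minimal hTne
          exact ⟨A, hA.prop, fun A' hA' h => hA.eq_of_ge hA' h⟩
        obtain ⟨I₀, hI₀c, rfl⟩ := hAT
        obtain ⟨x, hxI₀, hxh⟩ := aux_meets hwf hlf (hc𝒮 hI₀c).2 (hc𝒮 hI₀c).1 n
        refine ⟨x, ?_, hxh⟩
        intro I hIc
        rcases eq_or_ne I I₀ with rfl | hne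
        · exact hxI₀
        rcases hchain hIc hI₀c hne with h | h
        · -- I ⊆ I₀ : minimality forces I∩Ln = I₀∩Ln
          have hsub : I ∩ {x : P | Order.height x = (n : ℕ∞)} ⊆
              I₀ ∩ {x : P | Order.height x = (n : ℕ∞)} :=
            Set.inter_subset_inter_left _ h
          have heq := hAmin _ ⟨I, hIc, rfl⟩ hsub
          simp only [id_eq] at heq
          have hx' : x ∈ I ∩ {x : P | Order.height x = (n : ℕ∞)} := by
            rw [← heq]; exact ⟨hxI₀, hxh⟩
          exact hx'.1
        · exact h hxI₀
      choose f hf1 hf2 using key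
      apply Set.infinite_of_injective_forall_mem (f := f) _ hf1
      intro a b hab
      have := hf2 a
      rw [hab, hf2 b] at this
      exact_mod_cast this.symm
    · -- downward closed
      intro x hx y hyx
      intro I hIc
      exact (hc𝒮 hIc).2 x (hx I hIc) y hyx
  obtain ⟨J, -, hJ𝒮, hJmin⟩ := zorn_superset_nonempty 𝒮 hchain Set.univ huniv
  refine ⟨J, hJ𝒮.1, hJ𝒮.2, ?_⟩
  intro S hSJ hSdc hSne
  by_contra hSfin
  have hSinf : S.Infinite := hSfin
  exact hSne (hSJ.antisymm (hJmin ⟨hSinf, hSdc⟩ hSJ))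
end

section
/- Let P be an infinite poset in which every proper initial segment is finite. Then P is level-finite, has height ω, and for each n < ω there exists m < ω such that every element of height at most n is below every element of height at least m. -/
/-- An infinite poset whose proper initial segments are all finite is level-finite,
has height ω (every element has finite height and every finite height is attained),
and for each n there is m such that every element of height at most n is below every
element of height at least m. -/
theorem stmt5 (P : Type*) [PartialOrder P] [Infinite P]
    (hfin : ∀ S : Set P, (∀ x ∈ S, ∀ y, y ≤ x → y ∈ S) → S ≠ Set.univ → S.Finite) :
    (∀ n : ℕ, {x : P | Order.height x = (n : ℕ∞)}.Finite) ∧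
    (∀ x : P, Order.height x < ⊤) ∧
    (∀ n : ℕ, ∃ x : P, Order.height x = (n : ℕ∞)) ∧
    (∀ n : ℕ, ∃ m : ℕ, ∀ x y : P,
      Order.height x ≤ (n : ℕ∞) → (m : ℕ∞) ≤ Order.height y → x ≤ y) := by
  -- the set of elements not above x is finite
  have hU : ∀ x : P, {y : P | ¬ x ≤ y}.Finite := by
    intro x
    apply hfin
    · intro a ha y hya hx
      exact ha (hx.trans hya)
    · intro h
      have : x ∈ {y : P | ¬ x ≤ y} := h ▸ Set.mem_univ x
      exact this le_rfl
  -- the strict down-set of any element is finite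
  have hIio : ∀ x : P, (Set.Iio x).Finite := by
    intro x
    apply hfin
    · intro a ha y hya
      exact lt_of_le_of_lt hya ha
    · intro h
      have : x ∈ Set.Iio x := by rw [h]; trivial
      exact lt_irrefl x this
  -- every element has finite height
  have h2 : ∀ x : P, Order.height x < ⊤ := by
    intro x
    by_contra hcon
    have htop : Order.height x = ⊤ := by
      simpa [lt_top_iff_ne_top] using hcon
    haveI : Fintype (Set.Iio x) := (hIio x).fintype
    obtain ⟨p, hlast, hlen⟩ :=
      Order.height_eq_top_iff.mp htop (Fintype.card (Set.Iio x) + 1)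
    have hmem : ∀ i : Fin p.length, p i.castSucc ∈ Set.Iio x := by
      intro i
      have : (i.castSucc : Fin (p.length + 1)) < Fin.last p.length := by
        simp [Fin.lt_def, Fin.castSucc, i.isLt]
      have := p.strictMono this
      rwa [show p (Fin.last p.length) = x from hlast] at this
    let f : Fin p.length → Set.Iio x := fun i => ⟨p i.castSucc, hmem i⟩
    have hinj : Function.Injective f := by
      intro i j hij
      have h' : p i.castSucc = p j.castSucc := congrArg Subtype.val hij
      exact Fin.castSucc_injective _ (p.strictMono.injective h')
    have := Fintype.card_le_of_injective f hinj
    simp [hlen] at this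
  -- we can always go strictly up
  have hup : ∀ x : P, ∃ y : P, x < y := by
    intro x
    have hfin' : ({y : P | ¬ x ≤ y} ∪ {x}).Finite := (hU x).union (Set.finite_singleton x)
    obtain ⟨y, hy⟩ := hfin'.infinite_compl.nonempty
    simp only [Set.mem_compl_iff, Set.mem_union, Set.mem_setOf_eq, Set.mem_singleton_iff,
      not_or, not_not] at hy
    exact ⟨y, lt_of_le_of_ne hy.1 (fun h => hy.2 h.symm)⟩
  -- heights are unbounded
  have hunb : ∀ n : ℕ, ∃ x : P, (n : ℕ∞) ≤ Order.height x := by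
    intro n
    induction n with
    | zero => exact ⟨Classical.arbitrary P, by simp⟩
    | succ n ih =>
      obtain ⟨x, hx⟩ := ih
      obtain ⟨y, hy⟩ := hup x
      have hlt : Order.height x < Order.height y := Order.height_strictMono hy (h2 x)
      have : (n : ℕ∞) < Order.height y := lt_of_le_of_lt hx hlt
      exact ⟨y, Order.add_one_le_of_lt this⟩
  -- every finite height is attained
  have h3 : ∀ n : ℕ, ∃ x : P, Order.height x = (n : ℕ∞) := by
    intro n
    obtain ⟨x, hx⟩ := hunb n
    rcases eq_or_lt_of_le hx with h | h
    · exact ⟨x, h.symm⟩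
    · obtain ⟨y, _, hy⟩ := (Order.coe_lt_height_iff (h2 x)).mp h
      exact ⟨y, hy⟩
  -- the set of elements of height ≤ n is finite
  have hSn : ∀ n : ℕ, {x : P | Order.height x ≤ (n : ℕ∞)}.Finite := by
    intro n
    apply hfin
    · intro a ha y hya
      exact le_trans (Order.height_mono hya) ha
    · intro h
      obtain ⟨z, hz⟩ := h3 (n + 1)
      have : z ∈ {x : P | Order.height x ≤ (n : ℕ∞)} := by rw [h]; trivial
      rw [Set.mem_setOf_eq, hz] at this
      exact absurd this (by exact_mod_cast Nat.not_succ_le_self n)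
  refine ⟨fun n => (hSn n).subset (fun x hx => le_of_eq hx), h2, h3, ?_⟩
  -- the cofinality statement
  intro n
  have hB : ({y : P | ∃ x ∈ {x : P | Order.height x ≤ (n : ℕ∞)}, ¬ x ≤ y}).Finite := by
    have := (hSn n).biUnion (fun x _ => hU x)
    apply this.subset
    rintro y ⟨x, hx, hxy⟩
    exact Set.mem_biUnion hx hxy
  refine ⟨(hB.toFinset.sup fun y => (Order.height y).toNat) + 1, fun x y hx hy => ?_⟩
  by_contra hxy
  have hyB : y ∈ hB.toFinset := hB.mem_toFinset.mpr ⟨x, hx, hxy⟩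
  have hle : (Order.height y).toNat ≤ hB.toFinset.sup fun y => (Order.height y).toNat :=
    Finset.le_sup (f := fun y => (Order.height y).toNat) hyB
  have hcoe : ((Order.height y).toNat : ℕ∞) = Order.height y :=
    ENat.coe_toNat (h2 y).ne
  have : ((hB.toFinset.sup fun y => (Order.height y).toNat : ℕ) + 1 : ℕ∞) ≤
      ((Order.height y).toNat : ℕ∞) := by
    rw [hcoe]; exact_mod_cast hy
  have := (Nat.cast_le (α := ℕ∞)).mp (by exact_mod_cast this)
  omega
end

section
/- Let 𝒥 be the collection of infinite initial segments J of a well-founded level-finite poset P such that every element of J has finite height. Then the intersection of any nonempty chain (under set inclusion) of members of 𝒥 is again a member of 𝒥. -/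
/-- `JonssonCandidate P J` : `J` is an infinite initial segment of `P`
all of whose elements have finite height. -/
def JonssonCandidate (P : Type*) [PartialOrder P] (J : Set P) : Prop :=
  J.Infinite ∧ (∀ x ∈ J, ∀ y, y ≤ x → y ∈ J) ∧ ∀ x ∈ J, Order.height x < ⊤

/-- Every level is met by a Jonsson candidate. -/
lemma JonssonCandidate.meets_level {P : Type*} [PartialOrder P]
    (hlf : ∀ n : ℕ, {x : P | Order.height x = (n : ℕ∞)}.Finite)
    {J : Set P} (hJ : JonssonCandidate P J) (n : ℕ) :
    ∃ x ∈ J, Order.height x = (n : ℕ∞) := by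
  obtain ⟨hinf, hdc, hht⟩ := hJ
  have hns : ¬ J ⊆ ⋃ m ∈ Finset.range (n + 1), {x : P | Order.height x = (m : ℕ∞)} := by
    intro hsub
    exact hinf (((Finset.range (n + 1)).finite_toSet.biUnion
      (fun m _ => hlf m)).subset hsub)
  obtain ⟨x, hxJ, hx⟩ := Set.not_subset.mp hns
  simp only [Set.mem_iUnion, Finset.mem_range, Set.mem_setOf_eq, not_exists] at hx
  have hfin := hht x hxJ
  obtain ⟨m, hm⟩ : ∃ m : ℕ, Order.height x = (m : ℕ∞) := by
    obtain ⟨m, hm⟩ := WithTop.ne_top_iff_exists.mp hfin.ne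
    exact ⟨m, hm.symm⟩
  have hmn : n < m := by
    by_contra h
    exact hx m (by omega) hm
  obtain ⟨y, hyx, hy⟩ := (Order.coe_lt_height_iff hfin).mp
    (by rw [hm]; exact_mod_cast hmn)
  exact ⟨y, hdc x hxJ y hyx.le, hy⟩

/-- In a well-founded level-finite poset, the intersection of a nonempty chain of
infinite initial segments contained in the first ω levels is again such an initial segment. -/
theorem stmt6 (P : Type*) [PartialOrder P] (hwf : WellFoundedLT P)
    (hlf : ∀ n : ℕ, {x : P | Order.height x = (n : ℕ∞)}.Finite)
    (C : Set (Set P)) (hne : C.Nonempty) (hC : ∀ J ∈ C, JonssonCandidate P J)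
    (hchain : IsChain (· ⊆ ·) C) :
    JonssonCandidate P (⋂₀ C) := by
  obtain ⟨J₀, hJ₀⟩ := hne
  have hmeet : ∀ n : ℕ, ∃ x ∈ ⋂₀ C, Order.height x = (n : ℕ∞) := by
    intro n
    set L : Set P := {x : P | Order.height x = (n : ℕ∞)} with hL
    have hSfin : ((fun J => J ∩ L) '' C).Finite := by
      apply Set.Finite.subset (hlf n).finite_subsets
      rintro _ ⟨J, _, rfl⟩
      exact Set.inter_subset_right
    have hSne : ((fun J => J ∩ L) '' C).Nonempty := ⟨J₀ ∩ L, ⟨J₀, hJ₀, rfl⟩⟩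
    obtain ⟨a, ⟨J₁, hJ₁, rfl⟩, hmin⟩ :=
      (show ∃ a ∈ (fun J => J ∩ L) '' C, ∀ a' ∈ (fun J => J ∩ L) '' C, id a' ≤ id a → id a = id a' from by
        obtain ⟨a, ha, hm⟩ := Set.Finite.exists_minimalFor id _ hSfin hSne
        exact ⟨a, ha, fun b hb hle => le_antisymm (hm hb hle) hle⟩)
    obtain ⟨x, hxJ₁, hxL⟩ := (hC J₁ hJ₁).meets_level hlf n
    refine ⟨x, ?_, hxL⟩
    intro J hJ
    rcases eq_or_ne J J₁ with rfl | hne'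
    · exact hxJ₁
    rcases hchain hJ hJ₁ hne' with h | h
    · have h2 := hmin (J ∩ L) ⟨J, hJ, rfl⟩ (Set.inter_subset_inter_left L h)
      simp only [id] at h2
      have : x ∈ J ∩ L := h2 ▸ ⟨hxJ₁, hxL⟩
      exact this.1
    · exact h hxJ₁
  choose f hf hht using hmeet
  refine ⟨?_, ?_, ?_⟩
  · refine Set.infinite_of_injective_forall_mem (f := f) ?_ hf
    intro n m hnm
    have := hht n
    rw [hnm, hht m] at this
    exact_mod_cast this.symm
  · intro x hx y hyx J hJ
    exact (hC J hJ).2.1 x (hx J hJ) y hyx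
  · intro x hx
    exact (hC J₀ hJ₀).2.2 x (hx J₀ hJ₀)
end

section
/- Let ν be the 0-1 word on the nonpositive integers ℕ* = {…,−2,−1,0} given by ν = …11100 (ν(0)=0, ν(−1)=0, ν(i)=1 for i ≤ −2). Then every clique of G_ν has at most 3 vertices. -/
/-- The graph `G_ν` of a 0-1 word `ν` on the nonpositive integers,
with vertex set `{i : ℤ | i ≤ 0}`: for `i < j`, `{i,j}` is an edge iff
`ν j = 1` and `j = i+1`, or `ν j = 0` and `j ≠ i+1`. -/
def GnuNeg (ν : ℤ → Fin 2) : SimpleGraph {i : ℤ // i ≤ 0} where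
  Adj a b := (a.val < b.val ∧ ((ν b.val = 1 ∧ b.val = a.val + 1) ∨ (ν b.val = 0 ∧ b.val ≠ a.val + 1)))
    ∨ (b.val < a.val ∧ ((ν a.val = 1 ∧ a.val = b.val + 1) ∨ (ν a.val = 0 ∧ a.val ≠ b.val + 1)))
  symm := ⟨by intro a b h; tauto⟩
  loopless := ⟨by intro a h; rcases h with ⟨h, _⟩ | ⟨h, _⟩ <;> exact lt_irrefl _ h⟩

lemma adj_cases {a b : {i : ℤ // i ≤ 0}}
    (h : (GnuNeg (fun i => if -1 ≤ i then 0 else 1)).Adj a b) :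
    (b.val = a.val + 1 ∧ b.val ≤ -2) ∨ (a.val = b.val + 1 ∧ a.val ≤ -2) ∨
    (a.val < b.val ∧ -1 ≤ b.val ∧ b.val ≠ a.val + 1) ∨
    (b.val < a.val ∧ -1 ≤ a.val ∧ a.val ≠ b.val + 1) := by
  simp only [GnuNeg] at h
  rcases h with ⟨hlt, ⟨h1, h2⟩ | ⟨h1, h2⟩⟩ | ⟨hlt, ⟨h1, h2⟩ | ⟨h1, h2⟩⟩ <;>
    split_ifs at h1 with hc <;> simp_all <;> omega

/-- For the word `ν = …11100` (`ν 0 = ν (-1) = 0`, `ν i = 1` for `i ≤ -2`),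
every clique of `G_ν` has at most 3 vertices. -/
theorem stmt15 :
    ∀ S : Set {i : ℤ // i ≤ 0},
      (GnuNeg (fun i => if -1 ≤ i then 0 else 1)).IsClique S → S.Finite ∧ S.ncard ≤ 3 := by
  intro S hS
  set A := {v ∈ S | v.val ≤ -2} with hA
  set B := {v ∈ S | -1 ≤ v.val} with hB
  have hBsub : B.Subsingleton := by
    intro u hu v hv
    by_contra hne
    have h := adj_cases (hS hu.1 hv.1 hne)
    have h1 := u.2; have h2 := v.2
    have hu2 := hu.2; have hv2 := hv.2
    have hval : u.val ≠ v.val := fun h' => hne (Subtype.ext h')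
    rcases h with ⟨h,h'⟩|⟨h,h'⟩|⟨h,h',h''⟩|⟨h,h',h''⟩ <;> omega
  have hAkey : ∀ x ∈ A, ∀ y ∈ A, ∀ z ∈ A, x ≠ y → x ≠ z → y ≠ z → False := by
    intro x hx y hy z hz hxy hxz hyz
    have e1 := adj_cases (hS hx.1 hy.1 hxy)
    have e2 := adj_cases (hS hx.1 hz.1 hxz)
    have e3 := adj_cases (hS hy.1 hz.1 hyz)
    have hxv := hx.2; have hyv := hy.2; have hzv := hz.2
    have d1 : x.val ≠ y.val := fun h' => hxy (Subtype.ext h')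
    have d2 : x.val ≠ z.val := fun h' => hxz (Subtype.ext h')
    have d3 : y.val ≠ z.val := fun h' => hyz (Subtype.ext h')
    rcases e1 with ⟨h,h'⟩|⟨h,h'⟩|⟨h,h',h''⟩|⟨h,h',h''⟩ <;>
      rcases e2 with ⟨g,g'⟩|⟨g,g'⟩|⟨g,g',g''⟩|⟨g,g',g''⟩ <;>
      rcases e3 with ⟨f,f'⟩|⟨f,f'⟩|⟨f,f',f''⟩|⟨f,f',f''⟩ <;> omega
  have hAfc : A.Finite ∧ A.ncard ≤ 2 := by
    rcases Set.eq_empty_or_nonempty A with h | ⟨m, hm⟩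
    · simp [h]
    · by_cases hsub : A ⊆ {m}
      · refine ⟨(Set.finite_singleton m).subset hsub, ?_⟩
        calc A.ncard ≤ ({m} : Set _).ncard :=
              Set.ncard_le_ncard hsub (Set.finite_singleton m)
          _ ≤ 2 := by simp
      · obtain ⟨p, hp, hpm⟩ := Set.not_subset.1 hsub
        simp only [Set.mem_singleton_iff] at hpm
        have hcov : A ⊆ {m, p} := by
          intro q hq
          by_contra hq'
          simp only [Set.mem_insert_iff, Set.mem_singleton_iff, not_or] at hq'
          exact hAkey m hm p hp q hq (fun h' => hpm h'.symm)
            (fun h' => hq'.1 h'.symm) (fun h' => hq'.2 h'.symm)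
        have hfin : ({m, p} : Set _).Finite := (Set.finite_singleton p).insert m
        refine ⟨hfin.subset hcov, ?_⟩
        calc A.ncard ≤ ({m, p} : Set _).ncard := Set.ncard_le_ncard hcov hfin
          _ ≤ 2 := by
            rw [Set.ncard_pair (fun h => hpm h.symm)]
  have hSeq : S = A ∪ B := by
    ext v
    simp only [hA, hB, Set.mem_union, Set.mem_setOf_eq]
    have := v.2
    constructor
    · intro hv
      by_cases h2 : (v : ℤ) ≤ -2
      · exact Or.inl ⟨hv, h2⟩
      · exact Or.inr ⟨hv, by omega⟩
    · rintro (⟨h, _⟩ | ⟨h, _⟩) <;> exact h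
  obtain ⟨hAf, hAc⟩ := hAfc
  have hBf := hBsub.finite
  have hBc : B.ncard ≤ 1 := by
    rcases Set.eq_empty_or_nonempty B with h | ⟨b, hb⟩
    · simp [h]
    · have hcov : B ⊆ {b} := fun q hq => hBsub hq hb
      calc B.ncard ≤ ({b} : Set _).ncard :=
            Set.ncard_le_ncard hcov (Set.finite_singleton b)
        _ ≤ 1 := by simp
  rw [hSeq]
  exact ⟨hAf.union hBf, le_trans (Set.ncard_union_le A B) (by omega)⟩
end

section
/- Let P be a level-finite well-founded poset (each level is finite) such that every downward-closed subset containing infinitely many elements of P must meet every level. If D is an infinite downward-closed subset of P all of whose elements have finite height and such that every proper downward-closed subset of D is finite, then D is countable and there exists a sequence x_0 ≤ x_1 ≤ x_2 ≤ … in D that is cofinal in D (every element of D lies below some x_n). -/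
/-- In a level-finite well-founded poset in which every infinite initial segment
meets every level, an infinite initial segment `D` whose elements all have finite
height and whose proper initial segments are all finite is countable and contains
an increasing cofinal sequence. -/
theorem stmt19 (P : Type*) [PartialOrder P] (hwf : WellFoundedLT P)
    (hlf : ∀ n : ℕ, {x : P | Order.height x = (n : ℕ∞)}.Finite)
    (hmeets : ∀ S : Set P, (∀ x ∈ S, ∀ y, y ≤ x → y ∈ S) → S.Infinite →
      ∀ n : ℕ, ∃ x ∈ S, Order.height x = (n : ℕ∞))
    (D : Set P) (hdown : ∀ x ∈ D, ∀ y, y ≤ x → y ∈ D) (hinf : D.Infinite)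
    (hht : ∀ x ∈ D, Order.height x < ⊤)
    (hjonsson : ∀ S : Set P, S ⊆ D → (∀ x ∈ S, ∀ y, y ≤ x → y ∈ S) → S ≠ D → S.Finite) :
    D.Countable ∧ ∃ f : ℕ → P, (∀ n, f n ∈ D) ∧ (∀ n, f n ≤ f (n + 1)) ∧
      ∀ x ∈ D, ∃ n, x ≤ f n := by
  -- D is countable
  have hcount : D.Countable := by
    have hsub : D ⊆ ⋃ n : ℕ, {x : P | Order.height x = (n : ℕ∞)} := by
      intro x hx
      obtain ⟨n, hn⟩ := WithTop.ne_top_iff_exists.mp (hht x hx).ne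
      exact Set.mem_iUnion.mpr ⟨n, hn.symm⟩
    exact (Set.countable_iUnion fun n => (hlf n).countable).mono hsub
  refine ⟨hcount, ?_⟩
  -- for each x ∈ D, the set of z ∈ D not above x is finite
  have hfin : ∀ x ∈ D, {z ∈ D | ¬ x ≤ z}.Finite := by
    intro x hx
    apply hjonsson _ (fun z hz => hz.1)
    · intro z hz y hy
      exact ⟨hdown z hz.1 y hy, fun h => hz.2 (h.trans hy)⟩
    · intro h
      rw [← h] at hx
      exact hx.2 le_rfl
  -- D is up-directed
  have hdir : ∀ a b : P, ∃ c, a ∈ D → b ∈ D → c ∈ D ∧ a ≤ c ∧ b ≤ c := by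
    intro a b
    by_cases ha : a ∈ D
    · by_cases hb : b ∈ D
      · obtain ⟨c, hc⟩ := (hinf.diff ((hfin a ha).union (hfin b hb))).nonempty
        refine ⟨c, fun _ _ => ⟨hc.1, ?_, ?_⟩⟩
        · by_contra h; exact hc.2 (Or.inl ⟨hc.1, h⟩)
        · by_contra h; exact hc.2 (Or.inr ⟨hc.1, h⟩)
      · exact ⟨a, fun _ hb' => absurd hb' hb⟩
    · exact ⟨a, fun ha' => absurd ha' ha⟩
  choose F hF using hdir
  -- enumerate D
  obtain ⟨g, hg⟩ := Set.Countable.exists_eq_range hcount hinf.nonempty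
  have hgD : ∀ n, g n ∈ D := fun n => hg ▸ Set.mem_range_self n
  -- build the chain
  set f : ℕ → P := fun n => Nat.rec (g 0) (fun n fn => F fn (g (n + 1))) n with hf
  have key : ∀ n, f n ∈ D ∧ g n ≤ f n := by
    intro n
    induction n with
    | zero => exact ⟨hgD 0, le_rfl⟩
    | succ n ih =>
      obtain ⟨h1, h2, h3⟩ := hF (f n) (g (n + 1)) ih.1 (hgD (n + 1))
      exact ⟨h1, h3⟩
  refine ⟨f, fun n => (key n).1, fun n => (hF (f n) (g (n+1)) (key n).1 (hgD (n+1))).2.1, ?_⟩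
  intro x hx
  obtain ⟨n, rfl⟩ := hg ▸ hx
  exact ⟨n, (key n).2⟩
end
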